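/- Spectral bound at the selected truncation level: let A ∈ ℝ^{n×m} have rank at most r, let Ã ∈ ℝ^{n×m}, and let t ≥ ‖Ã − A‖_op. Suppose the set S := { s : 1 ≤ s ≤ r and σ_s(Ã) − σ_{s+1}(Ã) ≥ 8t } is nonempty, and let s := max S. Then σ_{s+1}(A) ≤ 10·r·t, where σ_k(·) denotes the k-th largest singular value. -/

import Mathlib

open MeasureTheory ProbabilityTheory Matrix
open scoped BigOperators ENNReal

noncomputable section

namespace CausalPanel

/-- ℓ₂→ℓ₂ operator (spectral) norm of a real matrix. -/
def opNorm {α β : Type*} [Fintype α] [Fintype β] [DecidableEq β] (A : Matrix α β ℝ) : ℝ :=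
  ‖LinearMap.toContinuousLinearMap (Matrix.toEuclideanLin A)‖

/-- Frobenius norm. -/
def frobNorm {α β : Type*} [Fintype α] [Fintype β] (A : Matrix α β ℝ) : ℝ :=
  Real.sqrt (∑ i, ∑ j, (A i j) ^ 2)

/-- Row-wise ℓ₂ norm `‖·‖_{2,∞}`. -/
def norm2Inf {α β : Type*} [Fintype α] [Fintype β] (A : Matrix α β ℝ) : ℝ :=
  ⨆ i, Real.sqrt (∑ j, (A i j) ^ 2)

/-- Entrywise sup norm `‖·‖_∞`. -/
def entrySup {α β : Type*} [Fintype α] [Fintype β] (A : Matrix α β ℝ) : ℝ :=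
  ⨆ i, ⨆ j, |A i j|

/-- Vector sup norm. -/
def vecSup {α : Type*} [Fintype α] (v : α → ℝ) : ℝ := ⨆ i, |v i|

/-- `sval A k` is the `k`-th largest singular value of `A` (1-indexed), via Courant–Fischer. -/
def sval {α β : Type*} [Fintype α] [Fintype β] [DecidableEq β] (A : Matrix α β ℝ) (k : ℕ) : ℝ :=
  sSup {t : ℝ | 0 ≤ t ∧ ∃ V : Submodule ℝ (EuclideanSpace ℝ β),
    Module.finrank ℝ V = k ∧ ∀ x ∈ V, t * ‖x‖ ≤ ‖Matrix.toEuclideanLin A x‖}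

/-- `s`-th singular value gap `δ_s = σ_s - σ_{s+1}`. -/
def svalGap {α β : Type*} [Fintype α] [Fintype β] [DecidableEq β] (A : Matrix α β ℝ) (s : ℕ) : ℝ :=
  sval A s - sval A (s + 1)

/-- Best rank-`s` approximation (a Frobenius-norm minimizer among matrices of rank ≤ `s`);
when `σ_s > σ_{s+1}` this is the truncated SVD. -/
def truncate {α β : Type*} [Fintype α] [Fintype β] [DecidableEq β] (A : Matrix α β ℝ) (s : ℕ) :
    Matrix α β ℝ :=
  Classical.epsilon fun B : Matrix α β ℝ =>
    B.rank ≤ s ∧ ∀ C : Matrix α β ℝ, C.rank ≤ s → frobNorm (A - B) ≤ frobNorm (A - C)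

/-- `(K, σ)`-bounded random matrix (entrywise moment conditions). -/
def KSigmaBounded {Ω : Type*} [MeasurableSpace Ω] (μm : Measure Ω) {α β : Type*}
    (E : Ω → α → β → ℝ) (K σ : ℝ) : Prop :=
  ∀ i j, (∫ ω, E ω i j ∂μm) = 0 ∧ (∫ ω, |E ω i j| ^ 2 ∂μm) ≤ σ ^ 2 ∧
    ∀ ℓ : ℕ, 2 ≤ ℓ → (∫ ω, |E ω i j| ^ ℓ ∂μm) ≤ K ^ (ℓ - 2) * σ ^ 2

/-- Orthonormal family of vectors. -/
def OrthonormalFamily {ι α : Type*} [DecidableEq ι] [Fintype α] (u : ι → α → ℝ) : Prop :=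
  ∀ i j, (∑ k, u i k * u j k) = if i = j then 1 else 0

/-- The symmetric dilation `[[0, A], [Aᵀ, 0]]`. -/
def dilation {α β : Type*} (A : Matrix α β ℝ) : Matrix (α ⊕ β) (α ⊕ β) ℝ :=
  Matrix.fromBlocks 0 A Aᵀ 0

/-- Complexified symmetric dilation. -/
def cdilation {α β : Type*} (A : Matrix α β ℝ) : Matrix (α ⊕ β) (α ⊕ β) ℂ :=
  (dilation A).map fun x => (x : ℂ)

/-- Eigenvector `𝐮_{+i}` of the symmetric dilation. -/
def uplusVec {n m r : ℕ} (u : Fin r → Fin n → ℝ) (v : Fin r → Fin m → ℝ) (i : Fin r) :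
    (Fin n ⊕ Fin m) → ℝ :=
  fun x => (Real.sqrt 2)⁻¹ * Sum.elim (u i) (v i) x

/-- Eigenvector `𝐮_{-i}` of the symmetric dilation. -/
def uminusVec {n m r : ℕ} (u : Fin r → Fin n → ℝ) (v : Fin r → Fin m → ℝ) (i : Fin r) :
    (Fin n ⊕ Fin m) → ℝ :=
  fun x => (Real.sqrt 2)⁻¹ * Sum.elim (u i) (fun j => -(v i j)) x

/-- ℓ₂ norm of a complex vector. -/
def cvecNorm {α : Type*} [Fintype α] (w : α → ℂ) : ℝ :=
  Real.sqrt (∑ j, ‖w j‖ ^ 2)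

/-- Arc-length integral of `f` along the segment from `w₁` to `w₂`. -/
def segInt (w₁ w₂ : ℂ) (f : ℂ → ℝ) : ℝ :=
  ‖w₂ - w₁‖ * ∫ t in (0:ℝ)..(1:ℝ), f (w₁ + (t : ℂ) * (w₂ - w₁))

/-- Arc-length integral of `f` along the boundary of the rectangle `[x₁, x₂] × [-T, T] ⊆ ℂ`. -/
def rectInt (x₁ x₂ T : ℝ) (f : ℂ → ℝ) : ℝ :=
  segInt ((x₁ : ℂ) - T * Complex.I) ((x₂ : ℂ) - T * Complex.I) f +
  segInt ((x₂ : ℂ) - T * Complex.I) ((x₂ : ℂ) + T * Complex.I) f +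
  segInt ((x₂ : ℂ) + T * Complex.I) ((x₁ : ℂ) + T * Complex.I) f +
  segInt ((x₁ : ℂ) + T * Complex.I) ((x₁ : ℂ) - T * Complex.I) f

/-- Arc-length integral along the contour `Γ = Γ⁺ ∪ Γ⁻`. -/
def contourInt (σs δs σ1 : ℝ) (f : ℂ → ℝ) : ℝ :=
  rectInt (σs - δs / 2) (2 * σ1) (2 * σ1) f + rectInt (-(2 * σ1)) (-σs + δs / 2) (2 * σ1) f

/-- The matrix `P(z)` appearing in the contour expansion. -/
def Pres {n m r : ℕ} (σv : Fin r → ℝ) (u : Fin r → Fin n → ℝ) (v : Fin r → Fin m → ℝ) (z : ℂ) :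
    Matrix (Fin n ⊕ Fin m) (Fin n ⊕ Fin m) ℂ :=
  (∑ i, ((σv i : ℂ) / ((z - σv i) * z)) •
      Matrix.vecMulVec (fun x => (uplusVec u v i x : ℂ)) (fun x => (uplusVec u v i x : ℂ))) -
  (∑ i, ((σv i : ℂ) / ((z + σv i) * z)) •
      Matrix.vecMulVec (fun x => (uminusVec u v i x : ℂ)) (fun x => (uminusVec u v i x : ℂ)))

end CausalPanel

/-!
By Weyl's inequality σ_k(Ã) and σ_k(A) differ by at most t, and σ_{r+1}(A) = 0 since rank A ≤ r,
so σ_{r+1}(Ã) ≤ t. Maximality of s means every gap σ_j(Ã) - σ_{j+1}(Ã) with s < j ≤ r is below 8t;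
telescoping these r - s gaps gives σ_{s+1}(A) ≤ σ_{s+1}(Ã) + t ≤ 2t + 8(r - s)t ≤ 10rt.
-/

theorem le_add_mul_of_sub_succ_le {f : ℕ → ℝ} {c : ℝ} {a b : ℕ} (hab : a ≤ b)
    (h : ∀ j, a ≤ j → j < b → f j - f (j + 1) ≤ c) : f a ≤ f b + (b - a) * c := by
  induction b, hab using Nat.le_induction with
  | base => simp
  | succ b hab ih =>
    have := h b hab b.lt_succ_self
    have := ih fun j hj hjb => h j hj (hjb.trans b.lt_succ_self)
    push_cast
    linarith

namespace CausalPanel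

variable {α β : Type*} [Fintype α] [Fintype β] [DecidableEq β]

theorem opNorm_sub_comm (A B : Matrix α β ℝ) : opNorm (A - B) = opNorm (B - A) := by
  unfold opNorm
  rw [← neg_sub B A, map_neg, map_neg, norm_neg]

theorem norm_toEuclideanLin_le_opNorm (A : Matrix α β ℝ) (x : EuclideanSpace ℝ β) :
    ‖Matrix.toEuclideanLin A x‖ ≤ opNorm A * ‖x‖ :=
  (LinearMap.toContinuousLinearMap (Matrix.toEuclideanLin A)).le_opNorm x

theorem sval_nonneg (A : Matrix α β ℝ) (k : ℕ) : 0 ≤ sval A k :=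
  Real.sSup_nonneg fun _ hu => hu.1

theorem bddAbove_svalSet (A : Matrix α β ℝ) {k : ℕ} (hk : 0 < k) :
    BddAbove {t : ℝ | 0 ≤ t ∧ ∃ V : Submodule ℝ (EuclideanSpace ℝ β),
      Module.finrank ℝ V = k ∧ ∀ x ∈ V, t * ‖x‖ ≤ ‖Matrix.toEuclideanLin A x‖} := by
  refine ⟨opNorm A, ?_⟩
  rintro u ⟨-, V, hV, hu⟩
  have hV_ne_bot : V ≠ ⊥ := by
    rintro rfl
    simp only [finrank_bot] at hV
    omega
  obtain ⟨x, hxV, hx⟩ := Submodule.exists_mem_ne_zero_of_ne_bot hV_ne_bot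
  have hx_pos : 0 < ‖x‖ := norm_pos_iff.mpr hx
  exact le_of_mul_le_mul_right ((hu x hxV).trans (norm_toEuclideanLin_le_opNorm A x)) hx_pos

/-- Weyl's inequality for singular values. -/
theorem sval_le_sval_add_opNorm_sub (A B : Matrix α β ℝ) {k : ℕ} (hk : 0 < k) :
    sval B k ≤ sval A k + opNorm (B - A) := by
  set ε := opNorm (B - A)
  have hε : 0 ≤ ε := norm_nonneg _
  refine Real.sSup_le ?_ (add_nonneg (sval_nonneg A k) hε)
  rintro u ⟨-, V, hV, hu⟩
  rcases le_or_gt u ε with huε | huε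
  · linarith [sval_nonneg A k]
  suffices u - ε ≤ sval A k by linarith
  refine le_csSup (bddAbove_svalSet A hk) ⟨by linarith, V, hV, fun x hx => ?_⟩
  have hBA : Matrix.toEuclideanLin B x =
      Matrix.toEuclideanLin A x + Matrix.toEuclideanLin (B - A) x := by
    simp [map_sub]
  have hB := hu x hx
  rw [hBA] at hB
  linarith [norm_add_le (Matrix.toEuclideanLin A x) (Matrix.toEuclideanLin (B - A) x),
    norm_toEuclideanLin_le_opNorm (B - A) x]

theorem sval_eq_zero_of_rank_lt (A : Matrix α β ℝ) {k : ℕ} (hk : A.rank < k) :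
    sval A k = 0 := by
  refine le_antisymm (Real.sSup_le ?_ le_rfl) (sval_nonneg A k)
  rintro u ⟨-, V, hV, hu⟩
  set L := Matrix.toEuclideanLin A
  have hrank : Module.finrank ℝ (LinearMap.range L) = A.rank :=
    (A.rank_eq_finrank_range_toLin (PiLp.basisFun 2 ℝ α) (PiLp.basisFun 2 ℝ β)).symm
  have hrank_nullity := LinearMap.finrank_range_add_finrank_ker L
  have hsup := Submodule.finrank_le (V ⊔ LinearMap.ker L)
  have hinf := Submodule.finrank_sup_add_finrank_inf_eq V (LinearMap.ker L)
  -- dimension count: `V` has dimension above `rank A`, so it meets `ker A` nontrivially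
  obtain ⟨x, ⟨hxV, hxker⟩, hx⟩ := Submodule.exists_mem_ne_zero_of_ne_bot
    (Submodule.one_le_finrank_iff.mp (by omega) : V ⊓ LinearMap.ker L ≠ ⊥)
  have hx_pos : 0 < ‖x‖ := norm_pos_iff.mpr hx
  have := hu x hxV
  rw [LinearMap.mem_ker.mp hxker, norm_zero] at this
  exact nonpos_of_mul_nonpos_left this hx_pos

end CausalPanel

open CausalPanel in
/-- Spectral bound at the selected truncation level. -/
theorem spectral_bound_at_selected_truncation_level
    (n m r : ℕ) (t : ℝ)
    (A At : Matrix (Fin n) (Fin m) ℝ)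
    (hrank : A.rank ≤ r)
    (ht : opNorm (At - A) ≤ t)
    (S : Finset ℕ)
    (hS : S = (Finset.Icc 1 r).filter (fun s => 8 * t ≤ sval At s - sval At (s + 1)))
    (hne : S.Nonempty)
    (s : ℕ) (hs : s = S.max' hne) :
    sval A (s + 1) ≤ 10 * r * t := by
  have ht0 : 0 ≤ t := (norm_nonneg _).trans ht
  have hs_mem : s ∈ S := hs ▸ S.max'_mem hne
  rw [hS, Finset.mem_filter, Finset.mem_Icc] at hs_mem
  obtain ⟨⟨hs_pos, hsr⟩, -⟩ := hs_mem
  have hgap : ∀ j, s + 1 ≤ j → j < r + 1 → sval At j - sval At (j + 1) ≤ 8 * t := by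
    intro j hsj hjr
    by_contra! hj
    have hjS : j ∈ S := by
      rw [hS, Finset.mem_filter, Finset.mem_Icc]
      exact ⟨⟨by omega, by omega⟩, hj.le⟩
    have := hs ▸ S.le_max' j hjS
    omega
  have htelescope := le_add_mul_of_sub_succ_le (f := sval At) (by omega) hgap
  have hweyl := sval_le_sval_add_opNorm_sub At A (k := s + 1) s.succ_pos
  have htail := sval_le_sval_add_opNorm_sub A At (k := r + 1) r.succ_pos
  rw [opNorm_sub_comm] at hweyl
  rw [sval_eq_zero_of_rank_lt A (Nat.lt_succ_of_le hrank)] at htail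
  have hs_one : (1 : ℝ) ≤ s := by exact_mod_cast hs_pos
  push_cast at htelescope
  calc sval A (s + 1) ≤ sval At (s + 1) + t := by linarith
    _ ≤ sval At (r + 1) + (r - s) * (8 * t) + t := by linarith
    _ ≤ 2 * t + (r - s) * (8 * t) := by linarith
    _ ≤ 10 * r * t := by nlinarith
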